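/- Let λ be an ordinal and let F = ⟨F_k : k < ω⟩ be a countable family of finitary functions on λ (each F_k : λ^{m_k} → λ for some m_k < ω). For η ∈ {}^ωλ (the space of ω-sequences from λ) let u_η be the closure of {η(n) : n < ω} under all the functions F_k, a countable subset of λ. Then for every countable ordinal ε < ω₁, the set B_ε := {η ∈ {}^ωλ : otp(u_η) = ε} is a Borel subset of the space {}^ωλ, where λ carries the discrete topology and {}^ωλ the product topology. -/

import Mathlib

open Cardinal Set

namespace ReflSCH

/-- The order type of a set of ordinals. -/
noncomputable def otp (s : Set Ordinal.{0}) : Ordinal.{1} :=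
  Ordinal.type (Subrel ((· < ·) : Ordinal.{0} → Ordinal.{0} → Prop) (· ∈ s))

/-- `s` is closed under each of the finitary functions `F k` (of arity `m k`). -/
def ClosedUnderF (m : ℕ → ℕ) (F : ℕ → (ℕ → Ordinal.{0}) → Ordinal.{0})
    (s : Set Ordinal.{0}) : Prop :=
  ∀ k : ℕ, ∀ x : ℕ → Ordinal.{0}, (∀ i < m k, x i ∈ s) → F k x ∈ s

/-- `u_η`: the closure of `{η n : n < ω}` inside `λ` under all the functions `F k`,
i.e. the smallest subset of `λ` containing the range of `η` and closed under `F`. -/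
def closF (l : Ordinal.{0}) (m : ℕ → ℕ) (F : ℕ → (ℕ → Ordinal.{0}) → Ordinal.{0})
    (η : ℕ → ↥(Set.Iio l)) : Set Ordinal.{0} :=
  ⋂₀ {s : Set Ordinal.{0} | s ⊆ Set.Iio l ∧ (∀ n : ℕ, (η n : Ordinal.{0}) ∈ s) ∧
      ClosedUnderF m F s}

/-! ### Coding of terms by natural numbers -/

/-- decode a natural number into an infinite sequence of (smaller) naturals -/
def seqOf : ℕ → ℕ → ℕ
  | d, 0 => d.unpair.1
  | d, i + 1 => seqOf d.unpair.2 i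

lemma seqOf_le (d i : ℕ) : seqOf d i ≤ d := by
  induction i generalizing d with
  | zero => exact Nat.unpair_left_le d
  | succ i ih => exact (ih d.unpair.2).trans (Nat.unpair_right_le d)

/-- code an initial segment of a sequence into a natural number -/
def tcode (x : ℕ → ℕ) : ℕ → ℕ
  | 0 => 0
  | n + 1 => Nat.pair (x 0) (tcode (fun i => x (i + 1)) n)

lemma seqOf_tcode (x : ℕ → ℕ) : ∀ n i, i < n → seqOf (tcode x n) i = x i := by
  intro n
  induction n generalizing x with
  | zero => intro i hi; omega
  | succ n ih =>
    intro i hi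
    cases i with
    | zero => simp [tcode, seqOf]
    | succ i => simpa [tcode, seqOf] using ih (fun j => x (j + 1)) i (by omega)

lemma seq_lt (c : ℕ) (h : c % 2 = 1) (i : ℕ) :
    seqOf ((c - 1) / 2).unpair.2 i < c := by
  have h1 := seqOf_le ((c - 1) / 2).unpair.2 i
  have h2 := Nat.unpair_right_le ((c - 1) / 2)
  have h3 := Nat.div_le_self (c - 1) 2
  omega

section Ev

variable (l : Ordinal.{0}) (m : ℕ → ℕ) (F : ℕ → (ℕ → Ordinal.{0}) → Ordinal.{0})

/-- evaluation of the term with code `c` at the sequence `η` -/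
def ev (η : ℕ → ↥(Set.Iio l)) : ℕ → Ordinal.{0}
  | c =>
    if h : c % 2 = 1 then
      F ((c - 1) / 2).unpair.1 (fun i => ev η (seqOf ((c - 1) / 2).unpair.2 i))
    else (η (c / 2) : Ordinal.{0})
termination_by c => c
decreasing_by exact seq_lt c h i

lemma ev_eq (η : ℕ → ↥(Set.Iio l)) (c : ℕ) :
    ev l F η c =
      if h : c % 2 = 1 then
        F ((c - 1) / 2).unpair.1 (fun i => ev l F η (seqOf ((c - 1) / 2).unpair.2 i))
      else (η (c / 2) : Ordinal.{0}) := by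
  rw [ev]

lemma ev_var (η : ℕ → ↥(Set.Iio l)) (n : ℕ) :
    ev l F η (2 * n) = (η n : Ordinal.{0}) := by
  rw [ev_eq]
  simp [Nat.mul_mod_right, Nat.mul_div_cancel_left n (by norm_num : 0 < 2)]

lemma ev_app (η : ℕ → ↥(Set.Iio l)) (k d : ℕ) :
    ev l F η (2 * Nat.pair k d + 1) =
      F k (fun i => ev l F η (seqOf d i)) := by
  rw [ev_eq]
  have h1 : (2 * Nat.pair k d + 1) % 2 = 1 := by omega
  have h2 : (2 * Nat.pair k d + 1 - 1) / 2 = Nat.pair k d := by omega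
  simp [h1, h2, Nat.unpair_pair]

variable {l m F}

lemma ev_lt (hmaps : ∀ k : ℕ, ∀ x : ℕ → Ordinal.{0}, (∀ i < m k, x i < l) → F k x < l)
    (η : ℕ → ↥(Set.Iio l)) : ∀ c, ev l F η c < l := by
  intro c
  induction c using Nat.strong_induction_on with
  | _ c ih =>
    rw [ev_eq]
    split
    · next h => exact hmaps _ _ (fun i _ => ih _ (seq_lt c h i))
    · exact (η _).2

lemma ev_mem (η : ℕ → ↥(Set.Iio l)) {s : Set Ordinal.{0}}
    (hm : ∀ n : ℕ, (η n : Ordinal.{0}) ∈ s) (hc : ClosedUnderF m F s) :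
    ∀ c, ev l F η c ∈ s := by
  intro c
  induction c using Nat.strong_induction_on with
  | _ c ih =>
    rw [ev_eq]
    split
    · next h => exact hc _ _ (fun i _ => ih _ (seq_lt c h i))
    · exact hm _

lemma closF_eq_range
    (hdep : ∀ k : ℕ, ∀ x y : ℕ → Ordinal.{0}, (∀ i < m k, x i = y i) → F k x = F k y)
    (hmaps : ∀ k : ℕ, ∀ x : ℕ → Ordinal.{0}, (∀ i < m k, x i < l) → F k x < l)
    (η : ℕ → ↥(Set.Iio l)) :
    closF l m F η = Set.range (ev l F η) := by
  classical
  apply subset_antisymm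
  · apply sInter_subset_of_mem
    refine ⟨?_, ?_, ?_⟩
    · rintro _ ⟨c, rfl⟩; exact ev_lt hmaps η c
    · intro n; exact ⟨2 * n, ev_var l F η n⟩
    · intro k x hx
      set g : ℕ → ℕ := fun i =>
        if h : ∃ c, ev l F η c = x i then h.choose else 0 with hg
      refine ⟨2 * Nat.pair k (tcode g (m k)) + 1, ?_⟩
      rw [ev_app]
      apply hdep
      intro i hi
      rw [seqOf_tcode g (m k) i hi]
      obtain ⟨c, hc⟩ := hx i hi
      have hex : ∃ c, ev l F η c = x i := ⟨c, hc⟩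
      simp only [hg, dif_pos hex]
      exact hex.choose_spec
  · apply subset_sInter
    rintro t ⟨_, hm2, hc2⟩
    rintro _ ⟨c, rfl⟩
    exact ev_mem η hm2 hc2 c

lemma ev_local
    (hdep : ∀ k : ℕ, ∀ x y : ℕ → Ordinal.{0}, (∀ i < m k, x i = y i) → F k x = F k y) :
    ∀ c : ℕ, ∃ A : Finset ℕ, ∀ η η' : ℕ → ↥(Set.Iio l),
    (∀ n ∈ A, η n = η' n) → ev l F η c = ev l F η' c := by
  classical
  intro c
  induction c using Nat.strong_induction_on with
  | _ c ih =>
    by_cases h : c % 2 = 1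
    · choose A hA using fun i => ih (seqOf ((c - 1) / 2).unpair.2 i) (seq_lt c h i)
      refine ⟨(Finset.range (m ((c - 1) / 2).unpair.1)).biUnion A, fun η η' hagree => ?_⟩
      rw [ev_eq l F η, ev_eq l F η', dif_pos h, dif_pos h]
      apply hdep
      intro i hi
      exact hA i η η' (fun n hn => hagree n (Finset.mem_biUnion.2 ⟨i, Finset.mem_range.2 hi, hn⟩))
    · refine ⟨{c / 2}, fun η η' hagree => ?_⟩
      rw [ev_eq l F η, ev_eq l F η', dif_neg h, dif_neg h,
        hagree (c / 2) (Finset.mem_singleton_self _)]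

end Ev

/-! ### Order type lemmas -/

lemma otp_inter_Iio {v : Set Ordinal.{0}} {x : Ordinal.{0}} (hx : x ∈ v) :
    Ordinal.typein (Subrel ((· < ·) : Ordinal.{0} → Ordinal.{0} → Prop) (· ∈ v)) ⟨x, hx⟩
      = otp (v ∩ Set.Iio x) := by
  rw [← Ordinal.type_subrel]
  show Ordinal.type _ = Ordinal.type _
  apply Ordinal.type_eq.2
  exact ⟨⟨⟨fun b => ⟨b.1.1, b.1.2, b.2⟩, fun y => ⟨⟨y.1, y.2.1⟩, y.2.2⟩,
    fun b => rfl, fun y => rfl⟩, Iff.rfl⟩⟩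

lemma otp_eq_iff {v : Set Ordinal.{0}} {α : Ordinal.{1}} :
    otp v = α ↔ (∀ x ∈ v, otp (v ∩ Set.Iio x) < α) ∧
      (∀ β < α, ∃ x ∈ v, otp (v ∩ Set.Iio x) = β) := by
  constructor
  · rintro rfl
    constructor
    · intro x hx
      rw [← otp_inter_Iio hx]
      exact Ordinal.typein_lt_type _ _
    · intro β hβ
      obtain ⟨⟨x, hx⟩, ha⟩ := Ordinal.typein_surj
        (Subrel ((· < ·) : Ordinal.{0} → Ordinal.{0} → Prop) (· ∈ v)) hβ
      exact ⟨x, hx, by rw [← otp_inter_Iio hx]; exact ha⟩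
  · rintro ⟨h1, h2⟩
    rcases lt_trichotomy (otp v) α with h | h | h
    · obtain ⟨x, hx, hx2⟩ := h2 _ h
      rw [← otp_inter_Iio hx] at hx2
      exact absurd hx2 (Ordinal.typein_lt_type _ _).ne
    · exact h
    · obtain ⟨⟨x, hx⟩, ha⟩ := Ordinal.typein_surj
        (Subrel ((· < ·) : Ordinal.{0} → Ordinal.{0} → Prop) (· ∈ v)) h
      rw [otp_inter_Iio hx] at ha
      exact absurd (ha ▸ h1 x hx) (lt_irrefl α)

lemma inter_Iio_inter {v : Set Ordinal.{0}} {x y : Ordinal.{0}} (h : x < y) :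
    (v ∩ Set.Iio y) ∩ Set.Iio x = v ∩ Set.Iio x := by
  ext z
  constructor
  · rintro ⟨⟨hz, _⟩, hzx⟩; exact ⟨hz, hzx⟩
  · rintro ⟨hz, hzx⟩; exact ⟨⟨hz, lt_trans hzx h⟩, hzx⟩

lemma otp_card_le {v : Set Ordinal.{0}} (hv : v.Countable) : (otp v).card ≤ ℵ₀ := by
  haveI := hv.to_subtype
  simpa [otp, Ordinal.card_type] using Cardinal.mk_le_aleph0 (α := ↥v)

lemma countable_Iio_of_card_le {α : Ordinal.{1}} (h : α.card ≤ ℵ₀) :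
    (Set.Iio α).Countable := by
  rw [← Set.countable_coe_iff, ← Cardinal.mk_le_aleph0_iff, Ordinal.mk_Iio_ordinal]
  exact (Cardinal.lift_le.2 h).trans (le_of_eq Cardinal.lift_aleph0)

section Char

variable {l : Ordinal.{0}} {m : ℕ → ℕ} {F : ℕ → (ℕ → Ordinal.{0}) → Ordinal.{0}}
variable (hdep : ∀ k : ℕ, ∀ x y : ℕ → Ordinal.{0}, (∀ i < m k, x i = y i) → F k x = F k y)
variable (hmaps : ∀ k : ℕ, ∀ x : ℕ → Ordinal.{0}, (∀ i < m k, x i < l) → F k x < l)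

include hdep hmaps

lemma mem_closF_iff (η : ℕ → ↥(Set.Iio l)) (x : Ordinal.{0}) :
    x ∈ closF l m F η ↔ ∃ s : ℕ, ev l F η s = x := by
  rw [closF_eq_range hdep hmaps]
  exact Set.mem_range

lemma otp_inter_ev_iff (η : ℕ → ↥(Set.Iio l)) (t : ℕ) (α : Ordinal.{1}) :
    otp (closF l m F η ∩ Set.Iio (ev l F η t)) = α ↔
      (∀ s : ℕ, ev l F η s < ev l F η t →
        otp (closF l m F η ∩ Set.Iio (ev l F η s)) < α) ∧
      (∀ β < α, ∃ s : ℕ, ev l F η s < ev l F η t ∧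
        otp (closF l m F η ∩ Set.Iio (ev l F η s)) = β) := by
  rw [otp_eq_iff]
  constructor
  · rintro ⟨h1, h2⟩
    constructor
    · intro s hs
      have hx : ev l F η s ∈ closF l m F η ∩ Set.Iio (ev l F η t) :=
        ⟨(mem_closF_iff hdep hmaps η _).2 ⟨s, rfl⟩, hs⟩
      have := h1 _ hx
      rwa [inter_Iio_inter hs] at this
    · intro β hβ
      obtain ⟨x, hx, hx2⟩ := h2 β hβ
      obtain ⟨s, rfl⟩ := (mem_closF_iff hdep hmaps η _).1 hx.1
      exact ⟨s, hx.2, by rwa [inter_Iio_inter hx.2] at hx2⟩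
  · rintro ⟨h1, h2⟩
    constructor
    · rintro x ⟨hxc, hxt⟩
      obtain ⟨s, rfl⟩ := (mem_closF_iff hdep hmaps η _).1 hxc
      rw [inter_Iio_inter hxt]
      exact h1 s hxt
    · intro β hβ
      obtain ⟨s, hst, hs2⟩ := h2 β hβ
      refine ⟨ev l F η s, ⟨(mem_closF_iff hdep hmaps η _).2 ⟨s, rfl⟩, hst⟩, ?_⟩
      rwa [inter_Iio_inter hst]

lemma otp_closF_iff (η : ℕ → ↥(Set.Iio l)) (α : Ordinal.{1}) :
    otp (closF l m F η) = α ↔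
      (∀ s : ℕ, otp (closF l m F η ∩ Set.Iio (ev l F η s)) < α) ∧
      (∀ β < α, ∃ s : ℕ, otp (closF l m F η ∩ Set.Iio (ev l F η s)) = β) := by
  rw [otp_eq_iff]
  constructor
  · rintro ⟨h1, h2⟩
    constructor
    · intro s
      exact h1 _ ((mem_closF_iff hdep hmaps η _).2 ⟨s, rfl⟩)
    · intro β hβ
      obtain ⟨x, hx, hx2⟩ := h2 β hβ
      obtain ⟨s, rfl⟩ := (mem_closF_iff hdep hmaps η _).1 hx
      exact ⟨s, hx2⟩
  · rintro ⟨h1, h2⟩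
    constructor
    · intro x hx
      obtain ⟨s, rfl⟩ := (mem_closF_iff hdep hmaps η _).1 hx
      exact h1 s
    · intro β hβ
      obtain ⟨s, hs⟩ := h2 β hβ
      exact ⟨ev l F η s, (mem_closF_iff hdep hmaps η _).2 ⟨s, rfl⟩, hs⟩

lemma countable_closF (η : ℕ → ↥(Set.Iio l)) : (closF l m F η).Countable := by
  rw [closF_eq_range hdep hmaps]
  exact Set.countable_range _

end Char

/-! ### Measurability -/

/-- the Borel σ-algebra on the product of discrete spaces -/
noncomputable def bms (l : Ordinal.{0}) : MeasurableSpace (ℕ → ↥(Set.Iio l)) :=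
  @borel _ (@Pi.topologicalSpace ℕ (fun _ => ↥(Set.Iio l)) (fun _ => ⊥))

section Meas

variable {l : Ordinal.{0}} {m : ℕ → ℕ} {F : ℕ → (ℕ → Ordinal.{0}) → Ordinal.{0}}
variable (hdep : ∀ k : ℕ, ∀ x y : ℕ → Ordinal.{0}, (∀ i < m k, x i = y i) → F k x = F k y)
variable (hmaps : ∀ k : ℕ, ∀ x : ℕ → Ordinal.{0}, (∀ i < m k, x i < l) → F k x < l)

include hdep hmaps

lemma meas_lt (s t : ℕ) :
    @MeasurableSet _ (bms l) {η : ℕ → ↥(Set.Iio l) | ev l F η s < ev l F η t} := by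
  letI : TopologicalSpace ↥(Set.Iio l) := ⊥
  haveI : DiscreteTopology ↥(Set.Iio l) := ⟨rfl⟩
  apply MeasurableSpace.measurableSet_generateFrom
  simp only [Set.mem_setOf_eq]
  obtain ⟨A, hA⟩ := ev_local (l := l) hdep s
  obtain ⟨B, hB⟩ := ev_local (l := l) hdep t
  rw [isOpen_iff_forall_mem_open]
  intro η hη
  refine ⟨Set.pi ↑(A ∪ B) (fun n => {η n}), ?_, ?_, ?_⟩
  · intro η' hη'
    have hag : ∀ n ∈ A ∪ B, η n = η' n := fun n hn =>
      (hη' n (Finset.mem_coe.2 hn)).symm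
    have h1 : ev l F η s = ev l F η' s :=
      hA η η' (fun n hn => hag n (Finset.mem_union_left _ hn))
    have h2 : ev l F η t = ev l F η' t :=
      hB η η' (fun n hn => hag n (Finset.mem_union_right _ hn))
    show ev l F η' s < ev l F η' t
    rw [← h1, ← h2]
    exact hη
  · exact isOpen_set_pi (A ∪ B).finite_toSet (fun n _ => isOpen_discrete _)
  · intro n _
    exact rfl

theorem measD :
    ∀ α : Ordinal.{1}, ∀ t : ℕ,
      @MeasurableSet _ (bms l)
        {η : ℕ → ↥(Set.Iio l) | otp (closF l m F η ∩ Set.Iio (ev l F η t)) = α} := by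
  intro α
  induction α using Ordinal.induction with
  | h α IH =>
    intro t
    by_cases hα : α.card ≤ ℵ₀
    · have hcnt : (Set.Iio α).Countable := countable_Iio_of_card_le hα
      have hset : {η : ℕ → ↥(Set.Iio l) |
            otp (closF l m F η ∩ Set.Iio (ev l F η t)) = α} =
          (⋂ s : ℕ, {η : ℕ → ↥(Set.Iio l) | ev l F η s < ev l F η t}ᶜ ∪
            ⋃ β ∈ Set.Iio α, {η : ℕ → ↥(Set.Iio l) |
              otp (closF l m F η ∩ Set.Iio (ev l F η s)) = β}) ∩
          (⋂ β ∈ Set.Iio α, ⋃ s : ℕ,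
            {η : ℕ → ↥(Set.Iio l) | ev l F η s < ev l F η t} ∩
            {η : ℕ → ↥(Set.Iio l) |
              otp (closF l m F η ∩ Set.Iio (ev l F η s)) = β}) := by
        ext η
        simp only [Set.mem_setOf_eq, Set.mem_inter_iff, Set.mem_iInter, Set.mem_iUnion,
          Set.mem_union, Set.mem_compl_iff, Set.mem_Iio, exists_prop]
        rw [otp_inter_ev_iff hdep hmaps η t α]
        constructor
        · rintro ⟨h1, h2⟩
          refine ⟨fun s => ?_, fun β hβ => h2 β hβ⟩
          by_cases hst : ev l F η s < ev l F η t
          · exact Or.inr ⟨_, h1 s hst, rfl⟩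
          · exact Or.inl hst
        · rintro ⟨h1, h2⟩
          refine ⟨fun s hst => ?_, fun β hβ => h2 β hβ⟩
          rcases h1 s with h | ⟨β, hβ, he⟩
          · exact absurd hst h
          · exact he ▸ hβ
      rw [hset]
      refine MeasurableSet.inter ?_ ?_
      · refine MeasurableSet.iInter fun s =>
          MeasurableSet.union (MeasurableSet.compl (meas_lt hdep hmaps s t)) ?_
        exact MeasurableSet.biUnion hcnt fun β hβ => IH β hβ s
      · exact MeasurableSet.biInter hcnt fun β hβ =>
          MeasurableSet.iUnion fun s => (meas_lt hdep hmaps s t).inter (IH β hβ s)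
    · have hempty : {η : ℕ → ↥(Set.Iio l) |
          otp (closF l m F η ∩ Set.Iio (ev l F η t)) = α} = ∅ := by
        rw [Set.eq_empty_iff_forall_notMem]
        intro η hη
        apply hα
        rw [← hη]
        exact otp_card_le
          ((countable_closF hdep hmaps η).mono Set.inter_subset_left)
      rw [hempty]
      exact @MeasurableSet.empty _ (bms l)

end Meas

/-- for every countable ordinal `ε`, the set
`B_ε = {η ∈ {}^ωλ : otp(u_η) = ε}` is Borel in the product of the discrete
topology on `λ`. -/
theorem stmt15 (l : Ordinal.{0}) (m : ℕ → ℕ)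
    (F : ℕ → (ℕ → Ordinal.{0}) → Ordinal.{0})
    (hdep : ∀ k : ℕ, ∀ x y : ℕ → Ordinal.{0}, (∀ i < m k, x i = y i) → F k x = F k y)
    (hmaps : ∀ k : ℕ, ∀ x : ℕ → Ordinal.{0}, (∀ i < m k, x i < l) → F k x < l)
    (ε : Ordinal.{0}) (hε : ε < (Cardinal.aleph 1).ord) :
    @MeasurableSet (ℕ → ↥(Set.Iio l))
      (@borel _ (@Pi.topologicalSpace ℕ (fun _ => ↥(Set.Iio l)) (fun _ => ⊥)))
      {η : ℕ → ↥(Set.Iio l) | otp (closF l m F η) = Ordinal.lift.{1,0} ε} := by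
  show @MeasurableSet _ (bms l) _
  have hc0 : ε.card ≤ ℵ₀ := by
    have h := Cardinal.lt_ord.1 hε
    rwa [← Cardinal.succ_aleph0, Order.lt_succ_iff] at h
  have hcard : (Ordinal.lift.{1} ε).card ≤ ℵ₀ := by
    rw [← Ordinal.lift_card]
    exact (Cardinal.lift_le.2 hc0).trans (le_of_eq Cardinal.lift_aleph0)
  have hcnt : (Set.Iio (Ordinal.lift.{1} ε)).Countable := countable_Iio_of_card_le hcard
  have hset : {η : ℕ → ↥(Set.Iio l) | otp (closF l m F η) = Ordinal.lift.{1} ε} =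
      (⋂ s : ℕ, ⋃ β ∈ Set.Iio (Ordinal.lift.{1} ε),
        {η : ℕ → ↥(Set.Iio l) | otp (closF l m F η ∩ Set.Iio (ev l F η s)) = β}) ∩
      (⋂ β ∈ Set.Iio (Ordinal.lift.{1} ε), ⋃ s : ℕ,
        {η : ℕ → ↥(Set.Iio l) | otp (closF l m F η ∩ Set.Iio (ev l F η s)) = β}) := by
    ext η
    simp only [Set.mem_setOf_eq, Set.mem_inter_iff, Set.mem_iInter, Set.mem_iUnion,
      Set.mem_Iio, exists_prop]
    rw [otp_closF_iff hdep hmaps η (Ordinal.lift.{1} ε)]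
    constructor
    · rintro ⟨h1, h2⟩
      exact ⟨fun s => ⟨_, h1 s, rfl⟩, fun β hβ => h2 β hβ⟩
    · rintro ⟨h1, h2⟩
      refine ⟨fun s => ?_, fun β hβ => h2 β hβ⟩
      obtain ⟨β, hβ, he⟩ := h1 s
      exact he ▸ hβ
  rw [hset]
  refine MeasurableSet.inter ?_ ?_
  · exact MeasurableSet.iInter fun s =>
      MeasurableSet.biUnion hcnt fun β _ => measD hdep hmaps β s
  · exact MeasurableSet.biInter hcnt fun β _ =>
      MeasurableSet.iUnion fun s => measD hdep hmaps β s

end ReflSCH
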